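/- arXiv:cs/0610025 — 9 statements merged into one kernel-verified Lean document; each statement's English description precedes it below -/
import Mathlib

section
/- Let m ≥ 1 and M = 2^m. The set of complex numbers {a + b·i : a, b ∈ ℤ, a and b odd, |a| ≤ M − 1, |b| ≤ M − 1} is equal to the set {(1+i) · ∑_{k=0}^{m−1} 2^k · i^{a_k} : a : Fin m → ZMod 4}, where for a ∈ ZMod 4, i^a denotes Complex.I ^ a.val and i = Complex.I. -/
open Complex

private lemma digit_split {n : ℕ} (hn : 1 ≤ n) {a : ℤ} (ha : Odd a)
    (hb : |a| ≤ 2 ^ (n + 1) - 1) :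
    ∃ ε a' : ℤ, (ε = 1 ∨ ε = -1) ∧ Odd a' ∧ |a'| ≤ 2 ^ n - 1 ∧ a = ε + 2 * a' := by
  have h1 : (2 : ℤ) ^ (n + 1) = 2 * 2 ^ n := by ring
  have h2 : (2 : ℤ) ∣ 2 ^ n := dvd_pow_self 2 (by omega)
  obtain ⟨k, rfl⟩ := ha
  rw [abs_le] at hb
  rcases Int.even_or_odd k with hk | hk
  · obtain ⟨j, rfl⟩ := hk
    refine ⟨-1, j + j + 1, Or.inr rfl, ⟨j, by ring⟩, ?_, by ring⟩
    rw [abs_le]; omega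
  · obtain ⟨j, rfl⟩ := hk
    refine ⟨1, 2 * j + 1, Or.inl rfl, ⟨j, by ring⟩, ?_, by ring⟩
    rw [abs_le]; omega

private lemma eps_to_c (ε δ : ℤ) (hε : ε = 1 ∨ ε = -1) (hδ : δ = 1 ∨ δ = -1) :
    ∃ c : ZMod 4, (ε : ℂ) + (δ : ℂ) * I = (1 + I) * I ^ (c : ZMod 4).val := by
  have hI2 : (I : ℂ) ^ 2 = -1 := I_sq
  rcases hε with rfl | rfl <;> rcases hδ with rfl | rfl
  · exact ⟨0, by norm_num⟩
  · refine ⟨3, ?_⟩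
    have : ((3 : ZMod 4)).val = 3 := by decide
    rw [this]
    have : (I : ℂ) ^ 3 = -I := by
      rw [pow_succ, hI2]; ring
    rw [this]; push_cast; ring_nf; rw [I_sq]; ring
  · refine ⟨1, ?_⟩
    have : ((1 : ZMod 4)).val = 1 := by decide
    rw [this]
    push_cast; ring_nf; rw [I_sq]; ring
  · refine ⟨2, ?_⟩
    have : ((2 : ZMod 4)).val = 2 := by decide
    rw [this, hI2]
    push_cast; ring

private lemma c_to_eps (c : ZMod 4) :
    ∃ ε δ : ℤ, (ε = 1 ∨ ε = -1) ∧ (δ = 1 ∨ δ = -1) ∧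
      (1 + I) * I ^ c.val = (ε : ℂ) + (δ : ℂ) * I := by
  have hc : c.val = 0 ∨ c.val = 1 ∨ c.val = 2 ∨ c.val = 3 := by
    have := c.val_lt; omega
  have hI2 : (I : ℂ) ^ 2 = -1 := I_sq
  have hI3 : (I : ℂ) ^ 3 = -I := by rw [pow_succ, hI2]; ring
  rcases hc with h | h | h | h <;> rw [h]
  · exact ⟨1, 1, Or.inl rfl, Or.inl rfl, by norm_num⟩
  · exact ⟨-1, 1, Or.inr rfl, Or.inl rfl, by push_cast; ring_nf; rw [I_sq]; ring⟩
  · exact ⟨-1, -1, Or.inr rfl, Or.inr rfl, by rw [hI2]; push_cast; ring⟩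
  · exact ⟨1, -1, Or.inl rfl, Or.inr rfl, by rw [hI3]; push_cast; ring_nf; rw [I_sq]; ring⟩

private lemma sum_succ (n : ℕ) (c : Fin (n + 1) → ZMod 4) :
    (1 + I) * ∑ k : Fin (n + 1), (2 : ℂ) ^ (k : ℕ) * I ^ (c k).val =
      (1 + I) * I ^ (c 0).val +
        2 * ((1 + I) * ∑ k : Fin n, (2 : ℂ) ^ (k : ℕ) * I ^ (c k.succ).val) := by
  rw [Fin.sum_univ_succ, mul_add]
  simp only [Fin.val_zero, pow_zero, one_mul, Finset.mul_sum]
  congr 1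
  apply Finset.sum_congr rfl
  intro k _
  simp only [Fin.val_succ, pow_succ]
  ring

private lemma main_ind : ∀ n : ℕ, ∀ z : ℂ,
    (∃ a b : ℤ, Odd a ∧ Odd b ∧ |a| ≤ 2 ^ (n + 1) - 1 ∧ |b| ≤ 2 ^ (n + 1) - 1 ∧
      z = (a : ℂ) + (b : ℂ) * I) ↔
    (∃ c : Fin (n + 1) → ZMod 4,
      z = (1 + I) * ∑ k : Fin (n + 1), (2 : ℂ) ^ (k : ℕ) * I ^ (c k).val) := by
  intro n
  induction n with
  | zero =>
    intro z
    constructor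
    · rintro ⟨a, b, ha, hb, hA, hB, rfl⟩
      have ha' : a = 1 ∨ a = -1 := by
        obtain ⟨j, rfl⟩ := ha; rw [abs_le] at hA; omega
      have hb' : b = 1 ∨ b = -1 := by
        obtain ⟨j, rfl⟩ := hb; rw [abs_le] at hB; omega
      obtain ⟨c0, hc⟩ := eps_to_c a b ha' hb'
      refine ⟨fun _ => c0, ?_⟩
      rw [Fin.sum_univ_one]
      simpa using hc
    · rintro ⟨c, rfl⟩
      obtain ⟨ε, δ, hε, hδ, heq⟩ := c_to_eps (c 0)
      refine ⟨ε, δ, ?_, ?_, ?_, ?_, ?_⟩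
      · rcases hε with rfl | rfl
        · exact ⟨0, rfl⟩
        · exact ⟨-1, by ring⟩
      · rcases hδ with rfl | rfl
        · exact ⟨0, rfl⟩
        · exact ⟨-1, by ring⟩
      · rcases hε with rfl | rfl <;> norm_num
      · rcases hδ with rfl | rfl <;> norm_num
      · rw [Fin.sum_univ_one]
        simpa using heq
  | succ n ih =>
    intro z
    constructor
    · rintro ⟨a, b, ha, hb, hA, hB, rfl⟩
      obtain ⟨ε, a', hε, ha', hA', rfl⟩ := digit_split (by omega) ha hA
      obtain ⟨δ, b', hδ, hb', hB', rfl⟩ := digit_split (by omega) hb hB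
      obtain ⟨c', hc'⟩ := (ih ((a' : ℂ) + (b' : ℂ) * I)).mp
        ⟨a', b', ha', hb', hA', hB', rfl⟩
      obtain ⟨c0, hc0⟩ := eps_to_c ε δ hε hδ
      refine ⟨Fin.cons c0 c', ?_⟩
      rw [sum_succ]
      simp only [Fin.cons_zero, Fin.cons_succ]
      rw [← hc0, ← hc']
      push_cast
      ring
    · rintro ⟨c, rfl⟩
      rw [sum_succ]
      obtain ⟨a', b', ha', hb', hA', hB', hw⟩ := (ih _).mpr ⟨fun k => c k.succ, rfl⟩
      obtain ⟨ε, δ, hε, hδ, heq⟩ := c_to_eps (c 0)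
      have h1 : (2 : ℤ) ^ (n + 2) = 2 * 2 ^ (n + 1) := by ring
      refine ⟨ε + 2 * a', δ + 2 * b', ?_, ?_, ?_, ?_, ?_⟩
      · rcases hε with rfl | rfl
        · exact ⟨a', by ring⟩
        · exact ⟨a' - 1, by ring⟩
      · rcases hδ with rfl | rfl
        · exact ⟨b', by ring⟩
        · exact ⟨b' - 1, by ring⟩
      · rw [abs_le] at hA' ⊢; rcases hε with rfl | rfl <;> omega
      · rw [abs_le] at hB' ⊢; rcases hδ with rfl | rfl <;> omega
      · rw [heq, hw]
        push_cast
        ring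

/-- The `M²`-QAM constellation (odd Gaussian integers in the box of
radius `M - 1`, `M = 2^m`) coincides with its quaternary (base-`i`) representation
`(1+i) · ∑_{k<m} 2^k · i^{a_k}`, `a_k ∈ ZMod 4`. -/
theorem qam_constellation_eq_quaternary_representation (m : ℕ) (hm : 1 ≤ m) :
    {z : ℂ | ∃ a b : ℤ, Odd a ∧ Odd b ∧ |a| ≤ 2 ^ m - 1 ∧ |b| ≤ 2 ^ m - 1 ∧
      z = (a : ℂ) + (b : ℂ) * Complex.I} =
    {z : ℂ | ∃ c : Fin m → ZMod 4,
      z = (1 + Complex.I) * ∑ k : Fin m, (2 : ℂ) ^ (k : ℕ) * Complex.I ^ (c k).val} := by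
  obtain ⟨n, rfl⟩ : ∃ n, m = n + 1 := ⟨m - 1, by omega⟩
  ext z
  simp only [Set.mem_setOf_eq]
  exact main_ind n z
end

section
/- Let m ≥ 1 and M = 2^m. For every odd integer x with −M + 1 ≤ x ≤ M − 1, there exists a unique function ε : Fin m → ZMod 2 such that x = ∑_{k=0}^{m−1} 2^k · (−1)^{ε_k.val}. -/
lemma aux_binrep : ∀ m (n : ℕ), n < 2 ^ m →
    ∃! ε : Fin m → ZMod 2, (n : ℤ) = ∑ k : Fin m, 2 ^ (k : ℕ) * ((ε k).val : ℤ) := by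
  intro m
  induction m with
  | zero =>
    intro n hn
    interval_cases n
    exact ⟨fun k => 0, by simp, fun y _ => funext fun k => k.elim0⟩
  | succ m ih =>
    intro n hn
    have hn' : n / 2 < 2 ^ m := by omega
    obtain ⟨ε', hε', huniq⟩ := ih (n / 2) hn'
    have hb : (((n % 2 : ℕ) : ZMod 2)).val = n % 2 := ZMod.val_cast_of_lt (by omega)
    refine ⟨Fin.cons ((n % 2 : ℕ) : ZMod 2) ε', ?_, ?_⟩
    · show (n:ℤ) = ∑ k : Fin (m+1), 2 ^ (k:ℕ) * (((Fin.cons ((n % 2 : ℕ) : ZMod 2) ε' : Fin (m+1) → ZMod 2) k).val : ℤ)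
      rw [Fin.sum_univ_succ]
      simp only [Fin.cons_zero, Fin.cons_succ, Fin.val_zero, pow_zero, one_mul, Fin.val_succ]
      have : ∑ k : Fin m, (2:ℤ) ^ ((k:ℕ) + 1) * ((ε' k).val : ℤ)
          = 2 * ∑ k : Fin m, (2:ℤ) ^ (k:ℕ) * ((ε' k).val : ℤ) := by
        rw [Finset.mul_sum]; congr 1; funext k; ring
      rw [this, ← hε', hb]

      omega
    · intro η hη
      rw [Fin.sum_univ_succ] at hη
      simp only [Fin.val_zero, pow_zero, one_mul, Fin.val_succ] at hη
      have hre : ∑ k : Fin m, (2:ℤ) ^ ((k:ℕ) + 1) * ((η k.succ).val : ℤ)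
          = 2 * ∑ k : Fin m, (2:ℤ) ^ (k:ℕ) * ((η k.succ).val : ℤ) := by
        rw [Finset.mul_sum]; congr 1; funext k; ring
      rw [hre] at hη
      have hv0 : (η 0).val < 2 := ZMod.val_lt _
      -- the tail sum is nonneg
      have hS : 0 ≤ ∑ k : Fin m, (2:ℤ) ^ (k:ℕ) * ((η k.succ).val : ℤ) :=
        Finset.sum_nonneg fun k _ => mul_nonneg (by positivity) (by positivity)
      set S := ∑ k : Fin m, (2:ℤ) ^ (k:ℕ) * ((η k.succ).val : ℤ) with hSdef
      have hval : ((η 0).val : ℤ) = (n % 2 : ℕ) := by omega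
      have hS2 : ((n / 2 : ℕ) : ℤ) = S := by omega
      have htail : (fun k => η k.succ) = ε' := huniq _ hS2
      funext k
      refine Fin.cases ?_ ?_ k
      · have : (η 0).val = ((((n % 2 : ℕ) : ZMod 2))).val := by rw [hb]; exact_mod_cast hval
        exact ZMod.val_injective 2 this
      · intro j
        simpa [Fin.cons_succ] using congrFun htail j

/-- Every odd integer `x` with `-2^m + 1 ≤ x ≤ 2^m - 1` has a unique
signed binary representation `x = ∑_{k<m} 2^k · (-1)^{ε_k}` with `ε : Fin m → ZMod 2`. -/
theorem odd_int_unique_signed_binary_representation (m : ℕ) (hm : 1 ≤ m)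
    (x : ℤ) (hx : Odd x) (hlb : -(2 ^ m) + 1 ≤ x) (hub : x ≤ 2 ^ m - 1) :
    ∃! ε : Fin m → ZMod 2, x = ∑ k : Fin m, 2 ^ (k : ℕ) * (-1 : ℤ) ^ (ε k).val := by
  obtain ⟨t, ht⟩ := hx
  -- n = (2^m - 1 - x)/2
  have hev : ∃ n : ℕ, (n : ℤ) = (2 ^ m - 1 - x) / 2 ∧ 2 * (n : ℤ) = 2 ^ m - 1 - x := by
    have h2 : ∃ y : ℤ, 2 ^ m - 1 - x = 2 * y := by
      refine ⟨2 ^ (m-1) - 1 - t, ?_⟩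
      have : (2:ℤ) ^ m = 2 * 2 ^ (m-1) := by
        rw [← pow_succ']; congr 1; omega
      rw [this, ht]; ring
    obtain ⟨y, hy⟩ := h2
    have hy0 : 0 ≤ y := by nlinarith
    exact ⟨y.toNat, by omega, by omega⟩
  obtain ⟨n, -, hn2⟩ := hev
  have hnlt : n < 2 ^ m := by
    have : (n : ℤ) < 2 ^ m := by omega
    exact_mod_cast this
  have key : ∀ ε : Fin m → ZMod 2,
      (x = ∑ k : Fin m, 2 ^ (k : ℕ) * (-1 : ℤ) ^ (ε k).val) ↔
      ((n : ℤ) = ∑ k : Fin m, 2 ^ (k : ℕ) * ((ε k).val : ℤ)) := by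
    intro ε
    have hpt : ∀ k : Fin m, ((-1 : ℤ)) ^ (ε k).val = 1 - 2 * ((ε k).val : ℤ) := by
      intro k
      have : (ε k).val < 2 := ZMod.val_lt _
      interval_cases h : (ε k).val <;> simp
    have hsum : ∑ k : Fin m, (2:ℤ) ^ (k : ℕ) * (-1 : ℤ) ^ (ε k).val
        = (2 ^ m - 1) - 2 * ∑ k : Fin m, 2 ^ (k : ℕ) * ((ε k).val : ℤ) := by
      have hg : ∑ k : Fin m, (2:ℤ) ^ (k:ℕ) = 2 ^ m - 1 := by
        have := geom_sum_mul (2:ℤ) m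
        rw [Fin.sum_univ_eq_sum_range]
        linarith
      calc ∑ k : Fin m, (2:ℤ) ^ (k : ℕ) * (-1 : ℤ) ^ (ε k).val
          = ∑ k : Fin m, ((2:ℤ) ^ (k:ℕ) - 2 * (2 ^ (k:ℕ) * ((ε k).val : ℤ))) := by
            refine Finset.sum_congr rfl fun k _ => ?_
            rw [hpt k]; ring
        _ = (∑ k : Fin m, (2:ℤ) ^ (k:ℕ)) - 2 * ∑ k : Fin m, 2 ^ (k:ℕ) * ((ε k).val : ℤ) := by
            rw [Finset.sum_sub_distrib, Finset.mul_sum]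
        _ = (2 ^ m - 1) - 2 * ∑ k : Fin m, 2 ^ (k:ℕ) * ((ε k).val : ℤ) := by rw [hg]
    rw [hsum]
    constructor <;> intro h <;> omega
  obtain ⟨ε, hε, huniq⟩ := aux_binrep m n hnlt
  exact ⟨ε, (key ε).mpr hε, fun y hy => huniq y ((key y).mp hy)⟩
end

section
/- Let T be a finite type with cardinality q ≥ 1, let m ≥ 1, and let f : Fin m → T → ZMod 4. Suppose that for every nonzero ω : Fin m → ZMod 4, |∑_{x ∈ T} i^{∑_{k} ω_k · f_k(x)}| ≤ √q (where the inner sum is taken in ZMod 4). Then for every ν : Fin m → ZMod 4, the number 𝐍(ν) of elements x ∈ T satisfying f_k(x) = ν_k for all k satisfies |𝐍(ν) − q/4^m| ≤ ((4^m − 1)/4^m) · √q (an inequality of real numbers). -/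
/-!
Orthogonality of the characters `ω ↦ ψ (ω ⬝ a)` of `R^ι` counts the fibre exactly:
`|R|^|ι| · N(ν) = ∑_ω ψ(-ω ⬝ ν) · S(ω)`, with `S(ω) = ∑_x ψ(ω ⬝ f(x))`. The term `ω = 0` is `|T|`,
and each of the other `|R|^|ι| - 1` terms has modulus `‖S(ω)‖`. This works for any finite
commutative ring with a primitive additive character; `a ↦ i^a` on `ZMod 4` is one.
-/

open Finset

namespace AddChar

variable {ι R : Type*}

lemma map_sum_eq_prod [AddCommMonoid R] {M : Type*} [CommMonoid M] (ψ : AddChar R M)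
    (s : Finset ι) (g : ι → R) : ψ (∑ i ∈ s, g i) = ∏ i ∈ s, ψ (g i) := by
  induction s using Finset.cons_induction with
  | empty => simp
  | cons i s hi ih => rw [sum_cons, prod_cons, map_add_eq_mul, ih]

variable [CommRing R] [Fintype R] [DecidableEq R] {ψ : AddChar R ℂ} [Fintype ι] [DecidableEq ι]

lemma sum_pi_apply_sum_mul (hψ : ψ.IsPrimitive) (a : ι → R) :
    ∑ ω : ι → R, ψ (∑ k, ω k * a k) =
      if a = 0 then (Fintype.card R : ℂ) ^ Fintype.card ι else 0 := by
  simp_rw [map_sum_eq_prod]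
  rw [← Fintype.prod_sum fun k c ↦ ψ (c * a k)]
  simp_rw [sum_mulShift _ hψ]
  split_ifs with ha
  · simp [ha]
  · obtain ⟨k, hk⟩ := Function.ne_iff.mp ha
    exact prod_eq_zero (mem_univ k) (by simpa using hk)

variable {T : Type*} [Fintype T]

lemma card_mul_card_filter_eq_sum (hψ : ψ.IsPrimitive) (f : ι → T → R) (ν : ι → R) :
    (Fintype.card R : ℂ) ^ Fintype.card ι * #{x | ∀ k, f k x = ν k} =
      ∑ ω : ι → R, ψ (-∑ k, ω k * ν k) * ∑ x, ψ (∑ k, ω k * f k x) := by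
  have hfiber (x : T) : ∑ ω : ι → R, ψ (∑ k, ω k * (f k x - ν k)) =
      if ∀ k, f k x = ν k then (Fintype.card R : ℂ) ^ Fintype.card ι else 0 := by
    simp_rw [sum_pi_apply_sum_mul hψ, funext_iff, Pi.zero_apply, sub_eq_zero]
  calc (Fintype.card R : ℂ) ^ Fintype.card ι * #{x | ∀ k, f k x = ν k}
      = ∑ x, ∑ ω : ι → R, ψ (∑ k, ω k * (f k x - ν k)) := by
        simp_rw [hfiber, sum_ite, sum_const_zero, add_zero, sum_const, nsmul_eq_mul, mul_comm]
    _ = ∑ ω : ι → R, ψ (-∑ k, ω k * ν k) * ∑ x, ψ (∑ k, ω k * f k x) := by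
        rw [sum_comm]
        simp_rw [mul_sum, ← map_add_eq_mul, mul_sub, sum_sub_distrib, neg_add_eq_sub]

lemma norm_card_mul_card_filter_sub_card_le (hψ : ψ.IsPrimitive) (f : ι → T → R) {B : ℝ}
    (hB : ∀ ω : ι → R, ω ≠ 0 → ‖∑ x, ψ (∑ k, ω k * f k x)‖ ≤ B) (ν : ι → R) :
    ‖(Fintype.card R : ℂ) ^ Fintype.card ι * #{x | ∀ k, f k x = ν k} - Fintype.card T‖ ≤
      ((Fintype.card R : ℝ) ^ Fintype.card ι - 1) * B := by
  rw [card_mul_card_filter_eq_sum hψ, ← add_sum_erase _ _ (mem_univ 0)]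
  simp only [Pi.zero_apply, zero_mul, sum_const_zero, neg_zero, map_zero_eq_one, one_mul,
    sum_const, card_univ, nsmul_eq_mul, mul_one, add_sub_cancel_left]
  calc _ ≤ ∑ _ω ∈ univ.erase (0 : ι → R), B := norm_sum_le_of_le _ fun ω hω ↦ by
        rw [norm_mul, ψ.norm_apply, one_mul]
        exact hB ω (ne_of_mem_erase hω)
    _ = ((Fintype.card R : ℝ) ^ Fintype.card ι - 1) * B := by
        rw [sum_const, card_erase_of_mem (mem_univ 0), card_univ, Fintype.card_fun, nsmul_eq_mul,
          Nat.cast_sub (Nat.one_le_pow _ _ Fintype.card_pos), Nat.cast_pow, Nat.cast_one]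

theorem abs_card_filter_sub_le (hψ : ψ.IsPrimitive) (f : ι → T → R) {B : ℝ}
    (hB : ∀ ω : ι → R, ω ≠ 0 → ‖∑ x, ψ (∑ k, ω k * f k x)‖ ≤ B) (ν : ι → R) :
    |(#{x | ∀ k, f k x = ν k} : ℝ) - Fintype.card T / (Fintype.card R : ℝ) ^ Fintype.card ι| ≤
      (((Fintype.card R : ℝ) ^ Fintype.card ι - 1) / (Fintype.card R : ℝ) ^ Fintype.card ι) *
        B := by
  set Q : ℝ := (Fintype.card R : ℝ) ^ Fintype.card ι
  set N : ℝ := ((#{x | ∀ k, f k x = ν k} : ℕ) : ℝ)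
  have hQ : 0 < Q := by positivity
  have h : |Q * N - Fintype.card T| ≤ (Q - 1) * B := by
    rw [← Real.norm_eq_abs, ← Complex.norm_real]
    push_cast [Q, N]
    exact norm_card_mul_card_filter_sub_card_le hψ f hB ν
  rw [show N - Fintype.card T / Q = (Q * N - Fintype.card T) / Q by field_simp, abs_div,
    abs_of_pos hQ, div_mul_eq_mul_div]
  exact div_le_div_of_nonneg_right h hQ.le

end AddChar

theorem approximate_balance_general (T : Type) [Fintype T] (q m : ℕ)
    (hq : Fintype.card T = q)
    (f : Fin m → T → ZMod 4)
    (hchar : ∀ ω : Fin m → ZMod 4, ω ≠ 0 →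
      ‖∑ x : T, Complex.I ^ (∑ k : Fin m, ω k * f k x).val‖ ≤ Real.sqrt q)
    (ν : Fin m → ZMod 4) :
    |((Finset.univ.filter fun x : T => ∀ k, f k x = ν k).card : ℝ) - q / 4 ^ m| ≤
      ((4 ^ m - 1) / 4 ^ m) * Real.sqrt q := by
  have h := AddChar.abs_card_filter_sub_le
    (AddChar.zmodChar_primitive_of_primitive_root 4 Complex.isPrimitiveRoot_I) f hchar ν
  simp only [hq, ZMod.card, Fintype.card_fin, Nat.cast_ofNat] at h
  -- the two filters differ only in their `Decidable` instances
  convert h using 6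

/-- Approximate balance.  If all nontrivial `ZMod 4`-linear combinations of
the quaternary functions `f_k : T → ZMod 4` have character sums of magnitude at most `√q`,
then for every `ν : Fin m → ZMod 4` the number of `x` with `f_k x = ν_k` for all `k`
deviates from `q / 4^m` by at most `((4^m - 1)/4^m)·√q`. -/
theorem approximate_balance (T : Type) [Fintype T] (q m : ℕ)
    (hq : Fintype.card T = q) (hq1 : 1 ≤ q) (hm : 1 ≤ m)
    (f : Fin m → T → ZMod 4)
    (hchar : ∀ ω : Fin m → ZMod 4, ω ≠ 0 →
      ‖∑ x : T, Complex.I ^ (∑ k : Fin m, ω k * f k x).val‖ ≤ Real.sqrt q)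
    (ν : Fin m → ZMod 4) :
    |((Finset.univ.filter fun x : T => ∀ k, f k x = ν k).card : ℝ) - q / 4 ^ m| ≤
      ((4 ^ m - 1) / 4 ^ m) * Real.sqrt q :=
  approximate_balance_general T q m hq f hchar ν
end

section
/- Let N ≥ 1, m ≥ 1, let u : Fin m → (ZMod N → ZMod 4) and κ : Fin m → ZMod 4, and define the 4^m-QAM sequence s(t) = (1+i) · ∑_{k=0}^{m−1} 2^k · i^{u_k(t)} · i^{κ_k}. Suppose that for all k ≠ l one has |θ_{u_k,u_l}(0)| ≤ 1 + √(N+1). Then the energy of s satisfies |∑_{t ∈ ZMod N} |s(t)|² − (2/3)·(4^m − 1)·N| ≤ 2·((2^m − 1)² − (4^m − 1)/3)·(1 + √(N+1)). -/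
/-- For `a ∈ ZMod 4`, the complex number `i^a := Complex.I ^ a.val`. -/
noncomputable def zi (a : ZMod 4) : ℂ := Complex.I ^ a.val

/-- Periodic correlation of complex sequences of period `N` at shift `τ`:
`θ_{s,s'}(τ) = ∑_t s(t+τ) · conj (s'(t))`. -/
noncomputable def pcorr {N : ℕ} [NeZero N] (s s' : ZMod N → ℂ) (τ : ZMod N) : ℂ :=
  ∑ t : ZMod N, s (t + τ) * (starRingEnd ℂ) (s' t)

/-- Periodic correlation of quaternary sequences of period `N` at shift `τ`:
`θ_{u,v}(τ) = ∑_t i^{u(t+τ)} · conj (i^{v(t)})`. -/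
noncomputable def qcorr {N : ℕ} [NeZero N] (u v : ZMod N → ZMod 4) (τ : ZMod N) : ℂ :=
  ∑ t : ZMod N, zi (u (t + τ)) * (starRingEnd ℂ) (zi (v t))

/-!
Write the QAM sequence as `s = ∑ₖ cₖ · i^{uₖ}` with `cₖ = (1 + i) 2^k i^{κₖ}`, so `|cₖ|² = 2 · 4^k`.
Its energy is the Gram sum `∑_{k,l} cₖ c̄ₗ θ_{uₖ,uₗ}(0)`. The diagonal terms contribute exactly
`∑ₖ 2 · 4^k N = (2/3)(4^m - 1) N`, and each off-diagonal term has modulus at most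
`2 · 2^{k+l} (1 + √(N+1))`; finally `∑_{k ≠ l} 2^{k+l} = (2^m - 1)² - (4^m - 1)/3`.
-/

open Finset

@[simp]
lemma norm_zi (a : ZMod 4) : ‖zi a‖ = 1 := by
  simp [zi]

lemma norm_one_add_I : ‖1 + Complex.I‖ = Real.sqrt 2 := by
  rw [Complex.norm_def, Complex.normSq_apply]
  norm_num

lemma norm_one_add_I_mul_two_pow_mul_zi (k : ℕ) (a : ZMod 4) :
    ‖(1 + Complex.I) * 2 ^ k * zi a‖ = Real.sqrt 2 * 2 ^ k := by
  rw [norm_mul, norm_mul, norm_zi, norm_one_add_I, norm_pow, Complex.norm_two, mul_one]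

lemma sum_sum_erase_mul {ι R : Type*} [Fintype ι] [DecidableEq ι] [CommRing R] (a : ι → R) :
    ∑ k, ∑ l ∈ univ.erase k, a k * a l = (∑ k, a k) ^ 2 - ∑ k, a k ^ 2 := by
  simp only [← mul_sum, sum_erase_eq_sub (mem_univ _), sum_sub_distrib, sq, sum_mul]

lemma geom_sum_fin (x : ℝ) (hx : x ≠ 1) (m : ℕ) :
    ∑ k : Fin m, x ^ (k : ℕ) = (x ^ m - 1) / (x - 1) := by
  rw [Fin.sum_univ_eq_sum_range, geom_sum_eq hx]

section Correlation

variable {N : ℕ} [NeZero N]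

lemma pcorr_self_zero (s : ZMod N → ℂ) : pcorr s s 0 = ((∑ t, ‖s t‖ ^ 2 : ℝ) : ℂ) := by
  simp [pcorr, Complex.mul_conj']

lemma pcorr_sum_sum {ι : Type*} [Fintype ι] (f : ι → ZMod N → ℂ) (τ : ZMod N) :
    pcorr (∑ k, f k) (∑ l, f l) τ = ∑ k, ∑ l, pcorr (f k) (f l) τ := by
  simp only [pcorr, Finset.sum_apply, map_sum, sum_mul_sum]
  rw [sum_comm]
  exact sum_congr rfl fun k _ => sum_comm

lemma abs_energy_sum_sub_le {ι : Type*} [Fintype ι] [DecidableEq ι] (f : ι → ZMod N → ℂ) :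
    |∑ t, ‖∑ k, f k t‖ ^ 2 - ∑ k, ∑ t, ‖f k t‖ ^ 2|
      ≤ ∑ k, ∑ l ∈ univ.erase k, ‖pcorr (f k) (f l) 0‖ := by
  have hexpand : ((∑ t, ‖∑ k, f k t‖ ^ 2 - ∑ k, ∑ t, ‖f k t‖ ^ 2 : ℝ) : ℂ)
      = ∑ k, ∑ l ∈ univ.erase k, pcorr (f k) (f l) 0 := by
    have h := pcorr_sum_sum f 0
    rw [sum_congr rfl fun k _ => (add_sum_erase univ _ (mem_univ k)).symm, sum_add_distrib,
      pcorr_self_zero] at h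
    simp only [Finset.sum_apply, pcorr_self_zero] at h
    push_cast at h ⊢
    rw [h]
    ring
  rw [← Real.norm_eq_abs, ← Complex.norm_real, hexpand]
  exact (norm_sum_le _ _).trans (sum_le_sum fun k _ => norm_sum_le _ _)

lemma sum_norm_mul_zi_sq (c : ℂ) (u : ZMod N → ZMod 4) :
    ∑ t, ‖c * zi (u t)‖ ^ 2 = ‖c‖ ^ 2 * N := by
  simp [mul_comm]

lemma norm_pcorr_mul_zi (c d : ℂ) (u v : ZMod N → ZMod 4) (τ : ZMod N) :
    ‖pcorr (fun t => c * zi (u t)) (fun t => d * zi (v t)) τ‖ = ‖c‖ * ‖d‖ * ‖qcorr u v τ‖ := by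
  have h : pcorr (fun t => c * zi (u t)) (fun t => d * zi (v t)) τ
      = c * (starRingEnd ℂ) d * qcorr u v τ := by
    simp only [pcorr, qcorr, mul_sum, map_mul]
    exact sum_congr rfl fun t _ => by ring
  rw [h, norm_mul, norm_mul, Complex.norm_conj]

end Correlation

theorem qam_sequence_energy_bound_general (N m : ℕ) [NeZero N]
    (u : Fin m → ZMod N → ZMod 4) (κ : Fin m → ZMod 4)
    (hcorr : ∀ k l : Fin m, k ≠ l →
      ‖qcorr (u k) (u l) 0‖ ≤ 1 + Real.sqrt (N + 1)) :
    |(∑ t : ZMod N,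
        ‖(1 + Complex.I) *
          ∑ k : Fin m, (2 : ℂ) ^ (k : ℕ) * zi (u k t) * zi (κ k)‖ ^ 2)
      - (2 / 3) * (4 ^ m - 1) * N|
    ≤ 2 * ((2 ^ m - 1) ^ 2 - (4 ^ m - 1) / 3) * (1 + Real.sqrt (N + 1)) := by
  set B := 1 + Real.sqrt (N + 1)
  set c : Fin m → ℂ := fun k => (1 + Complex.I) * 2 ^ (k : ℕ) * zi (κ k)
  have hs : ∀ t, (1 + Complex.I) * ∑ k : Fin m, (2 : ℂ) ^ (k : ℕ) * zi (u k t) * zi (κ k)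
      = ∑ k, c k * zi (u k t) := fun t => by
    rw [mul_sum]; exact sum_congr rfl fun k _ => by ring
  have hc : ∀ k, ‖c k‖ = Real.sqrt 2 * 2 ^ (k : ℕ) := fun k =>
    norm_one_add_I_mul_two_pow_mul_zi _ _
  have hpow : ∀ k : ℕ, ((2 : ℝ) ^ k) ^ 2 = 4 ^ k := fun k => by
    rw [← pow_mul, mul_comm, pow_mul]; norm_num
  have hcc : ∀ k l, ‖c k‖ * ‖c l‖ = 2 * (2 ^ (k : ℕ) * 2 ^ (l : ℕ)) := fun k l => by
    rw [hc, hc, mul_mul_mul_comm, Real.mul_self_sqrt zero_le_two]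
  have hdiag : ∑ k, ∑ t, ‖c k * zi (u k t)‖ ^ 2 = (2 / 3) * (4 ^ m - 1) * N := by
    simp only [sum_norm_mul_zi_sq, hc, mul_pow, Real.sq_sqrt zero_le_two, hpow, ← sum_mul,
      ← mul_sum, geom_sum_fin 4 (by norm_num)]
    ring
  calc _ = |∑ t, ‖∑ k, c k * zi (u k t)‖ ^ 2 - ∑ k, ∑ t, ‖c k * zi (u k t)‖ ^ 2| := by
        simp only [hs, hdiag]
    _ ≤ ∑ k, ∑ l ∈ univ.erase k, ‖c k‖ * ‖c l‖ * ‖qcorr (u k) (u l) 0‖ := by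
        simpa only [norm_pcorr_mul_zi] using
          abs_energy_sum_sub_le fun k t => c k * zi (u k t)
    _ ≤ ∑ k, ∑ l ∈ univ.erase k, ‖c k‖ * ‖c l‖ * B := by
        gcongr with k _ l hl
        exact hcorr k l (ne_of_mem_erase hl).symm
    _ = 2 * (∑ k : Fin m, ∑ l ∈ univ.erase k, (2 : ℝ) ^ (k : ℕ) * 2 ^ (l : ℕ)) * B := by
        simp only [hcc, mul_sum, sum_mul]
    _ = 2 * ((2 ^ m - 1) ^ 2 - (4 ^ m - 1) / 3) * B := by
        rw [sum_sum_erase_mul, geom_sum_fin 2 (by norm_num)]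
        simp only [hpow, geom_sum_fin 4 (by norm_num)]
        ring

/-- Energy of a `4^m`-QAM sequence built from quaternary components whose
pairwise (distinct-index) zero-shift correlations are bounded by `1 + √(N+1)`:
the energy deviates from `(2/3)(4^m - 1)N` by at most
`2((2^m - 1)² - (4^m - 1)/3)(1 + √(N+1))`. -/
theorem qam_sequence_energy_bound (N m : ℕ) [NeZero N] (hm : 1 ≤ m)
    (u : Fin m → ZMod N → ZMod 4) (κ : Fin m → ZMod 4)
    (hcorr : ∀ k l : Fin m, k ≠ l →
      ‖qcorr (u k) (u l) 0‖ ≤ 1 + Real.sqrt (N + 1)) :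
    |(∑ t : ZMod N,
        ‖(1 + Complex.I) *
          ∑ k : Fin m, (2 : ℂ) ^ (k : ℕ) * zi (u k t) * zi (κ k)‖ ^ 2)
      - (2 / 3) * (4 ^ m - 1) * N|
    ≤ 2 * ((2 ^ m - 1) ^ 2 - (4 ^ m - 1) / 3) * (1 + Real.sqrt (N + 1)) :=
  qam_sequence_energy_bound_general N m u κ hcorr
end

section
/- Let N ≥ 1, m ≥ 1, let u, u' : Fin m → (ZMod N → ZMod 4), and define the basic sequences s(t) = (1+i) · ∑_{k=0}^{m−1} 2^k · i^{u_k(t)} and s'(t) = (1+i) · ∑_{l=0}^{m−1} 2^l · i^{u'_l(t)}. Suppose θ_{u_k,u'_k}(0) = −1 for all k, and |θ_{u_k,u'_l}(0)| ≤ 1 + √(N+1) for all k ≠ l. Then |θ_{s,s'}(0)| ≤ 2·(2^m − 1)² + 2·((2/3)·4^m − 2^{m+1} + 4/3)·√(N+1). -/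
open Finset

theorem pcorr_const_mul {N : ℕ} [NeZero N] (c : ℂ) (s s' : ZMod N → ℂ) (τ : ZMod N) :
    pcorr (fun t => c * s t) (fun t => c * s' t) τ = Complex.normSq c * pcorr s s' τ := by
  simp only [pcorr, mul_sum, map_mul, ← Complex.mul_conj]
  exact sum_congr rfl fun _ _ => by ring

theorem pcorr_sum_sum_s9 {N : ℕ} [NeZero N] {ι : Type*} [Fintype ι] (a b : ι → ℂ)
    (u v : ι → ZMod N → ZMod 4) (τ : ZMod N) :
    pcorr (fun t => ∑ k, a k * zi (u k t)) (fun t => ∑ l, b l * zi (v l t)) τ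
      = ∑ k, ∑ l, a k * starRingEnd ℂ (b l) * qcorr (u k) (v l) τ := by
  unfold pcorr qcorr
  simp_rw [map_sum, sum_mul_sum, mul_sum]
  rw [sum_comm]
  refine sum_congr rfl fun k _ => ?_
  rw [sum_comm]
  exact sum_congr rfl fun l _ => sum_congr rfl fun t _ => by rw [map_mul]; ring

theorem norm_weighted_double_sum_le {ι : Type*} [Fintype ι] [DecidableEq ι]
    (w : ι → ℝ) (hw : ∀ k, 0 ≤ w k) (c : ι → ι → ℂ) {A B : ℝ}
    (hdiag : ∀ k, ‖c k k‖ ≤ A) (hoff : ∀ k l, k ≠ l → ‖c k l‖ ≤ B) :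
    ‖∑ k, ∑ l, (w k : ℂ) * w l * c k l‖
      ≤ A * ∑ k, w k ^ 2 + B * ((∑ k, w k) ^ 2 - ∑ k, w k ^ 2) := by
  calc ‖∑ k, ∑ l, (w k : ℂ) * w l * c k l‖
      ≤ ∑ k, ∑ l, ‖(w k : ℂ) * w l * c k l‖ :=
        (norm_sum_le _ _).trans (sum_le_sum fun k _ => norm_sum_le _ _)
    _ ≤ ∑ k, ∑ l, (B * (w k * w l) + if k = l then (A - B) * w k ^ 2 else 0) := by
        gcongr with k _ l _
        rw [norm_mul, norm_mul, Complex.norm_real, Complex.norm_real, Real.norm_of_nonneg (hw k),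
          Real.norm_of_nonneg (hw l)]
        split_ifs with hkl
        · subst hkl
          nlinarith [mul_le_mul_of_nonneg_left (hdiag k) (mul_nonneg (hw k) (hw k))]
        · nlinarith [mul_le_mul_of_nonneg_left (hoff k l hkl) (mul_nonneg (hw k) (hw l))]
    _ = A * ∑ k, w k ^ 2 + B * ((∑ k, w k) ^ 2 - ∑ k, w k ^ 2) := by
        simp only [sum_add_distrib, sum_ite_eq, mem_univ, if_true, ← mul_sum, ← sum_mul]
        ring

theorem fin_geom_sum_eq {m : ℕ} {x : ℝ} (hx : x ≠ 1) :
    ∑ k : Fin m, x ^ (k : ℕ) = (x ^ m - 1) / (x - 1) := by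
  rw [Fin.sum_univ_eq_sum_range (fun k => x ^ k), geom_sum_eq hx]

theorem selected_family_zero_shift_bound_general (N m : ℕ) [NeZero N]
    (u u' : Fin m → ZMod N → ZMod 4)
    (hdiag : ∀ k : Fin m, qcorr (u k) (u' k) 0 = -1)
    (hoff : ∀ k l : Fin m, k ≠ l →
      ‖qcorr (u k) (u' l) 0‖ ≤ 1 + Real.sqrt (N + 1)) :
    ‖pcorr
      (fun t => (1 + Complex.I) * ∑ k : Fin m, (2 : ℂ) ^ (k : ℕ) * zi (u k t))
      (fun t => (1 + Complex.I) * ∑ l : Fin m, (2 : ℂ) ^ (l : ℕ) * zi (u' l t))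
      0‖
    ≤ 2 * (2 ^ m - 1) ^ 2 +
      2 * ((2 / 3) * 4 ^ m - 2 ^ (m + 1) + 4 / 3) * Real.sqrt (N + 1) := by
  have hnormSq : Complex.normSq (1 + Complex.I) = 2 := by
    norm_num [Complex.normSq_apply]
  have hweights : ∀ k l : Fin m, (2 : ℂ) ^ (k : ℕ) * starRingEnd ℂ ((2 : ℂ) ^ (l : ℕ))
      = ((2 ^ (k : ℕ) : ℝ) : ℂ) * ((2 ^ (l : ℕ) : ℝ) : ℂ) := by
    intro k l; rw [map_pow, Complex.conj_ofNat]; push_cast; rfl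
  have hbound := norm_weighted_double_sum_le (fun k : Fin m => (2 : ℝ) ^ (k : ℕ))
    (fun _ => by positivity) (fun k l => qcorr (u k) (u' l) 0)
    (fun k => (by simp [hdiag k] : ‖qcorr (u k) (u' k) 0‖ ≤ 1)) hoff
  have hsum : ∑ k : Fin m, (2 : ℝ) ^ (k : ℕ) = 2 ^ m - 1 := by
    rw [fin_geom_sum_eq (by norm_num)]; norm_num
  have hsum_sq : ∑ k : Fin m, ((2 : ℝ) ^ (k : ℕ)) ^ 2 = (4 ^ m - 1) / 3 := by
    simp_rw [← pow_mul, mul_comm _ 2, pow_mul]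
    rw [fin_geom_sum_eq (by norm_num)]; norm_num
  rw [pcorr_const_mul, pcorr_sum_sum_s9, hnormSq, norm_mul, Complex.norm_real, Real.norm_ofNat]
  simp only [hweights]
  have hfour : (4 : ℝ) ^ m = (2 ^ m) ^ 2 := by rw [← pow_mul, mul_comm, pow_mul]; norm_num
  calc _ ≤ 2 * (1 * ((4 ^ m - 1) / 3)
          + (1 + √(N + 1)) * ((2 ^ m - 1) ^ 2 - (4 ^ m - 1) / 3)) := by
        rw [← hsum, ← hsum_sq]; gcongr
    _ = _ := by rw [pow_succ, hfour]; ring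

/-- Zero-shift correlation bound for basic sequences of the selected family
`SQ`: matched components have correlation exactly `-1` at shift zero and mismatched ones
are bounded by `1 + √(N+1)`; then
`|θ_{s,s'}(0)| ≤ 2(2^m - 1)² + 2((2/3)4^m - 2^{m+1} + 4/3)√(N+1)`. -/
theorem selected_family_zero_shift_bound (N m : ℕ) [NeZero N] (hm : 1 ≤ m)
    (u u' : Fin m → ZMod N → ZMod 4)
    (hdiag : ∀ k : Fin m, qcorr (u k) (u' k) 0 = -1)
    (hoff : ∀ k l : Fin m, k ≠ l →
      ‖qcorr (u k) (u' l) 0‖ ≤ 1 + Real.sqrt (N + 1)) :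
    ‖pcorr
      (fun t => (1 + Complex.I) * ∑ k : Fin m, (2 : ℂ) ^ (k : ℕ) * zi (u k t))
      (fun t => (1 + Complex.I) * ∑ l : Fin m, (2 : ℂ) ^ (l : ℕ) * zi (u' l t))
      0‖
    ≤ 2 * (2 ^ m - 1) ^ 2 +
      2 * ((2 / 3) * 4 ^ m - 2 ^ (m + 1) + 4 / 3) * Real.sqrt (N + 1) :=
  selected_family_zero_shift_bound_general N m u u' hdiag hoff
end

section
/- Let N' be an odd positive integer, N = 2N', let u₀, u₁, v₀, v₁ : ZMod N' → ZMod 4, and let s, s' : ZMod N → ℂ be the interleaved sequences built from (u₀,u₁) and (v₀,v₁) respectively. Then for every even τ ∈ ZMod N, θ_{s,s'}(τ) = 10·(θ_{u₀,v₀}(τ̄) + θ_{u₁,v₁}(τ̄)), where τ̄ is the image of τ under the natural ring map ZMod N → ZMod N'. -/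
/-- The natural reduction `ZMod (2·N') → ZMod N'`. -/
noncomputable def redN (N' : ℕ) (t : ZMod (2 * N')) : ZMod N' :=
  ZMod.castHom (dvd_mul_left N' 2) (ZMod N') t

/-- The interleaved sequence of period `N = 2·N'` built from the quaternary sequences
`u₀, u₁` of period `N'`:  `s(t) = (1+i)·(i^{u₁(t̄)} + 2·i^{u₀(t̄)})` for even `t` and
`s(t) = (1+i)·i·(i^{u₀(t̄)} − 2·i^{u₁(t̄)})` for odd `t`, where `t̄ = t mod N'`. -/
noncomputable def interleave {N' : ℕ} (u₀ u₁ : ZMod N' → ZMod 4) :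
    ZMod (2 * N') → ℂ := fun t =>
  if Even t.val then
    (1 + Complex.I) * (zi (u₁ (redN N' t)) + 2 * zi (u₀ (redN N' t)))
  else
    (1 + Complex.I) * Complex.I * (zi (u₀ (redN N' t)) - 2 * zi (u₁ (redN N' t)))

lemma zmod2_sum (g : ZMod 2 → ℂ) : ∑ a, g a = g 0 + g 1 := Fin.sum_univ_two g

lemma key_alg (x0 x1 y0 y1 : ℂ) :
    (1+Complex.I)*(x1 + 2*x0) * ((1+ -Complex.I)*(y1 + 2*y0))
      + (1+Complex.I)*Complex.I*(x0-2*x1) * ((1+ -Complex.I)*(-Complex.I)*(y0-2*y1))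
    = 10*(x0*y0 + x1*y1) := by
  linear_combination (Complex.I^2*((x0-2*x1)*(y0-2*y1)) - (x1+2*x0)*(y1+2*y0)
    - 2*((x0-2*x1)*(y0-2*y1))) * Complex.I_sq

/-- Even-shift correlation of interleaved sequences:
`θ_{s,s'}(τ) = 10·(θ_{u₀,v₀}(τ̄) + θ_{u₁,v₁}(τ̄))` for even `τ`. -/
theorem interleaved_correlation_even_shift (N' : ℕ) (hodd : Odd N') [NeZero N']
    (u₀ u₁ v₀ v₁ : ZMod N' → ZMod 4) (τ : ZMod (2 * N')) (hτ : Even τ.val) :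
    pcorr (interleave u₀ u₁) (interleave v₀ v₁) τ
    = 10 * (qcorr u₀ v₀ (redN N' τ) + qcorr u₁ v₁ (redN N' τ)) := by
  classical
  have c : Nat.Coprime 2 N' := hodd.coprime_two_left
  set e := ZMod.chineseRemainder c with he_def
  have he : ∀ t : ZMod (2 * N'), e t = ((t.val : ZMod 2), redN N' t) := by
    intro t
    have h1 : (e t) = ((t.val : ℕ) : ZMod 2 × ZMod N') := by
      rw [show (e t : ZMod 2 × ZMod N')
        = ZMod.castHom (show Nat.lcm 2 N' ∣ 2 * N' by simp [Nat.lcm_dvd_iff])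
            (ZMod 2 × ZMod N') t from rfl]
      simp [ZMod.natCast_val]
    rw [h1]; ext <;> simp [redN, ZMod.natCast_val]
  set σ := redN N' τ with hσ
  have hred : ∀ p : ZMod 2 × ZMod N', redN N' (e.symm p) = p.2 := by
    intro p
    have := he (e.symm p)
    rw [e.apply_symm_apply] at this
    exact (congrArg Prod.snd this).symm
  have hpar : ∀ p : ZMod 2 × ZMod N', Even (e.symm p).val ↔ p.1 = 0 := by
    intro p
    have h := he (e.symm p)
    rw [e.apply_symm_apply] at h
    have h1 : ((e.symm p).val : ZMod 2) = p.1 := (congrArg Prod.fst h).symm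
    rw [← h1, ZMod.natCast_eq_zero_iff]
    exact even_iff_two_dvd
  have hτ2 : (τ.val : ZMod 2) = 0 := by
    rw [ZMod.natCast_eq_zero_iff]; exact even_iff_two_dvd.mp hτ
  have heτ : e τ = (0, σ) := by rw [he τ, hτ2]
  have hshift : ∀ p : ZMod 2 × ZMod N', e.symm p + τ = e.symm (p.1, p.2 + σ) := by
    intro p
    apply e.injective
    rw [map_add, e.apply_symm_apply, e.apply_symm_apply, heτ]
    ext <;> simp
  -- evaluate interleave at e.symm (0,b) and e.symm (1,b)
  have hiv0 : ∀ (w₀ w₁ : ZMod N' → ZMod 4) (b : ZMod N'),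
      interleave w₀ w₁ (e.symm (0, b)) = (1 + Complex.I) * (zi (w₁ b) + 2 * zi (w₀ b)) := by
    intro w₀ w₁ b
    rw [interleave, if_pos ((hpar (0, b)).mpr rfl), hred]
  have hiv1 : ∀ (w₀ w₁ : ZMod N' → ZMod 4) (b : ZMod N'),
      interleave w₀ w₁ (e.symm (1, b))
        = (1 + Complex.I) * Complex.I * (zi (w₀ b) - 2 * zi (w₁ b)) := by
    intro w₀ w₁ b
    rw [interleave, if_neg, hred]
    rw [hpar (1, b)]
    exact one_ne_zero
  rw [pcorr]
  rw [show (∑ t : ZMod (2 * N'), interleave u₀ u₁ (t + τ)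
        * (starRingEnd ℂ) (interleave v₀ v₁ t))
      = ∑ p : ZMod 2 × ZMod N', interleave u₀ u₁ (e.symm p + τ)
        * (starRingEnd ℂ) (interleave v₀ v₁ (e.symm p)) from
    (Fintype.sum_bijective ⇑e.symm e.symm.bijective _ _ (fun p => rfl)).symm]
  rw [Fintype.sum_prod_type_right]
  have hin : ∀ b : ZMod N',
      (∑ a : ZMod 2, interleave u₀ u₁ (e.symm (a, b) + τ)
          * (starRingEnd ℂ) (interleave v₀ v₁ (e.symm (a, b))))
      = 10 * (zi (u₀ (b + σ)) * (starRingEnd ℂ) (zi (v₀ b))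
          + zi (u₁ (b + σ)) * (starRingEnd ℂ) (zi (v₁ b))) := by
    intro b
    rw [zmod2_sum (fun a => interleave u₀ u₁ (e.symm (a, b) + τ)
      * (starRingEnd ℂ) (interleave v₀ v₁ (e.symm (a, b))))]
    rw [hshift, hshift]
    simp only [hiv0, hiv1]
    simp only [map_mul, map_add, map_sub, map_one, map_ofNat, Complex.conj_I]
    exact key_alg (zi (u₀ (b + σ))) (zi (u₁ (b + σ)))
      ((starRingEnd ℂ) (zi (v₀ b))) ((starRingEnd ℂ) (zi (v₁ b)))
  simp only [hin]
  rw [qcorr, qcorr, ← Finset.mul_sum, ← Finset.sum_add_distrib]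
end

section
/- Let N' be an odd positive integer, N = 2N', let u₀, u₁, v₀, v₁ : ZMod N' → ZMod 4, and let s, s' : ZMod N → ℂ be the interleaved sequences built from (u₀,u₁) and (v₀,v₁) respectively. Then for every odd τ ∈ ZMod N, θ_{s,s'}(τ) = 10·i·(θ_{u₀,v₁}(τ̄) − θ_{u₁,v₀}(τ̄)), where τ̄ is the image of τ under the natural ring map ZMod N → ZMod N'. -/
/-- Odd-shift correlation of interleaved sequences:
`θ_{s,s'}(τ) = 10·i·(θ_{u₀,v₁}(τ̄) − θ_{u₁,v₀}(τ̄))` for odd `τ`. -/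
theorem interleaved_correlation_odd_shift (N' : ℕ) (hodd : Odd N') [NeZero N']
    (u₀ u₁ v₀ v₁ : ZMod N' → ZMod 4) (τ : ZMod (2 * N')) (hτ : Odd τ.val) :
    pcorr (interleave u₀ u₁) (interleave v₀ v₁) τ
    = 10 * Complex.I * (qcorr u₀ v₁ (redN N' τ) - qcorr u₁ v₀ (redN N' τ)) := by
  have hco : Nat.Coprime 2 N' := Nat.coprime_two_left.mpr hodd
  have hNZ : NeZero (2 * N') := ⟨Nat.mul_ne_zero two_ne_zero (NeZero.ne N')⟩
  set π : ZMod (2 * N') →+* ZMod 2 := ZMod.castHom (dvd_mul_right 2 N') (ZMod 2) with hπ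
  set σ : ZMod N' := redN N' τ with hσ
  -- basic facts
  have hπval : ∀ t : ZMod (2 * N'), π t = ((t.val : ℕ) : ZMod 2) := by
    intro t; rw [ZMod.castHom_apply, ← ZMod.natCast_val]
  have hredval : ∀ t : ZMod (2 * N'), redN N' t = ((t.val : ℕ) : ZMod N') := by
    intro t; rw [redN, ZMod.castHom_apply, ← ZMod.natCast_val]
  have heven : ∀ t : ZMod (2 * N'), Even t.val ↔ π t = 0 := by
    intro t
    rw [hπval, ZMod.natCast_eq_zero_iff, Nat.even_iff, Nat.dvd_iff_mod_eq_zero]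
  have hπτ : π τ = 1 := by
    rw [hπval, ← ZMod.natCast_mod, Nat.odd_iff.mp hτ, Nat.cast_one]
  -- the bijection
  set e : ZMod (2 * N') → ZMod 2 × ZMod N' := fun t => (π t, redN N' t) with he
  have hbij : Function.Bijective e := by
    rw [Fintype.bijective_iff_injective_and_card]
    constructor
    · intro a b hab
      rw [he, Prod.mk.injEq] at hab
      obtain ⟨h1, h2⟩ := hab
      rw [hπval, hπval, ZMod.natCast_eq_natCast_iff] at h1
      rw [hredval, hredval, ZMod.natCast_eq_natCast_iff] at h2
      have : a.val ≡ b.val [MOD 2 * N'] :=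
        (Nat.modEq_and_modEq_iff_modEq_mul hco).mp ⟨h1, h2⟩
      rw [← ZMod.natCast_zmod_val a, ← ZMod.natCast_zmod_val b,
        ZMod.natCast_eq_natCast_iff]
      exact this
    · simp [ZMod.card]
  -- rewrite the sum through the bijection
  set g : ZMod 2 × ZMod N' → ℂ := fun p =>
    (if p.1 + 1 = 0 then
        (1 + Complex.I) * (zi (u₁ (p.2 + σ)) + 2 * zi (u₀ (p.2 + σ)))
      else
        (1 + Complex.I) * Complex.I * (zi (u₀ (p.2 + σ)) - 2 * zi (u₁ (p.2 + σ)))) *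
    (starRingEnd ℂ)
      (if p.1 = 0 then
        (1 + Complex.I) * (zi (v₁ p.2) + 2 * zi (v₀ p.2))
      else
        (1 + Complex.I) * Complex.I * (zi (v₀ p.2) - 2 * zi (v₁ p.2))) with hg
  have hstep : pcorr (interleave u₀ u₁) (interleave v₀ v₁) τ = ∑ p, g p := by
    rw [pcorr]
    refine Fintype.sum_bijective e hbij _ _ ?_
    intro t
    have hred : redN N' (t + τ) = redN N' t + σ := by
      rw [hσ, redN, redN, redN, map_add]
    have hπt : π (t + τ) = π t + 1 := by rw [map_add, hπτ]
    have h1 : Even (t + τ).val ↔ π t + 1 = 0 := by rw [heven, hπt]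
    have h2 : Even t.val ↔ π t = 0 := heven t
    rw [hg]
    simp only [interleave, he]
    rw [if_congr h1 rfl rfl, if_congr h2 rfl rfl, hred]
  rw [hstep, Fintype.sum_prod_type]
  have h2sum : ∀ h : ZMod 2 → ℂ, ∑ j : ZMod 2, h j = h 0 + h 1 := fun h =>
    Fin.sum_univ_two h
  rw [h2sum]
  have hz : (0 : ZMod 2) + 1 ≠ 0 := by decide
  have ho : (1 : ZMod 2) + 1 = 0 := by decide
  have hone : (1 : ZMod 2) ≠ 0 := by decide
  simp only [hg, hz, ho, hone, eq_self_iff_true, if_true, if_false]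
  rw [qcorr, qcorr, ← Finset.sum_sub_distrib, Finset.mul_sum, ← Finset.sum_add_distrib]
  refine Finset.sum_congr rfl fun x _ => ?_
  simp only [map_mul, map_add, map_sub, map_one, map_ofNat, Complex.conj_I]
  linear_combination (-5 * Complex.I *
    (zi (u₀ (x + σ)) * (starRingEnd ℂ) (zi (v₁ x)) -
      zi (u₁ (x + σ)) * (starRingEnd ℂ) (zi (v₀ x)))) * Complex.I_sq
end

section
/- Let N' be an odd positive integer, N = 2N', let u₀, u₁, v₀, v₁ : ZMod N' → ZMod 4, and let s, s' : ZMod N → ℂ be the interleaved sequences built from (u₀,u₁) and (v₀,v₁) respectively. Suppose that for every σ ∈ ZMod N' there exist w ∈ ℂ with |w| ≤ √(N'+1) and ε ∈ {1,−1} such that θ_{u₀,v₀}(σ) = −1 + w and θ_{u₁,v₁}(σ) = −1 + ε·i·w, and that |θ_{u₀,v₁}(σ)| ≤ 1 + √(N'+1) and |θ_{u₁,v₀}(σ)| ≤ 1 + √(N'+1) for every σ ∈ ZMod N'. Then for every τ ∈ ZMod N, |θ_{s,s'}(τ)| ≤ 20·(1 + √(N'+1)). -/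
/-!
By the Chinese remainder theorem `ZMod (2N') ≃ ZMod 2 × ZMod N'`, so the correlation of two
sequences interleaved by parity splits into correlations of their halves at the shift `τ mod N'`:
even halves against even halves and odd against odd for even `τ`, crossed halves for odd `τ`.
For the 16-QAM halves, `(1+i)·conj(1+i) = 2` and `i·conj i = 1` collapse these sums to
`10·(θ_{u₀,v₀} + θ_{u₁,v₁})` and `10i·(θ_{u₀,v₁} − θ_{u₁,v₀})` respectively, and each of these
component correlations has modulus at most `1 + √(N'+1)`.
-/

open Complex ComplexConjugate

theorem ZMod.chineseRemainder_fst {m n : ℕ} (h : m.Coprime n) (t : ZMod (m * n)) :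
    (ZMod.chineseRemainder h t).1 = ZMod.castHom (dvd_mul_right m n) (ZMod m) t :=
  Prod.fst_zmod_cast t

theorem ZMod.chineseRemainder_snd {m n : ℕ} (h : m.Coprime n) (t : ZMod (m * n)) :
    (ZMod.chineseRemainder h t).2 = ZMod.castHom (dvd_mul_left n m) (ZMod n) t :=
  Prod.snd_zmod_cast t

section Parity

variable {N' : ℕ} (h : Nat.Coprime 2 N')

theorem even_val_iff_chineseRemainder_fst_eq_zero [NeZero N'] (t : ZMod (2 * N')) :
    Even t.val ↔ (ZMod.chineseRemainder h t).1 = 0 := by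
  rw [ZMod.chineseRemainder_fst, ZMod.castHom_apply, ← ZMod.natCast_val,
    ZMod.natCast_eq_zero_iff, even_iff_two_dvd]

theorem redN_eq_chineseRemainder_snd (t : ZMod (2 * N')) :
    redN N' t = (ZMod.chineseRemainder h t).2 :=
  (ZMod.chineseRemainder_snd h t).symm

end Parity

noncomputable def parityInterleave {N' : ℕ} (a b : ZMod N' → ℂ) : ZMod (2 * N') → ℂ :=
  fun t => if Even t.val then a (redN N' t) else b (redN N' t)

theorem parityInterleave_chineseRemainder_symm {N' : ℕ} [NeZero N'] (h : Nat.Coprime 2 N')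
    (a b : ZMod N' → ℂ) (p : ZMod 2) (x : ZMod N') :
    parityInterleave a b ((ZMod.chineseRemainder h).symm (p, x)) = if p = 0 then a x else b x := by
  simp only [parityInterleave, even_val_iff_chineseRemainder_fst_eq_zero h,
    redN_eq_chineseRemainder_snd h, RingEquiv.apply_symm_apply]

theorem pcorr_parityInterleave {N' : ℕ} [NeZero N'] (hodd : Odd N') (a b c d : ZMod N' → ℂ)
    (τ : ZMod (2 * N')) :
    pcorr (parityInterleave a b) (parityInterleave c d) τ =
      if Even τ.val then pcorr a c (redN N' τ) + pcorr b d (redN N' τ)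
      else pcorr b c (redN N' τ) + pcorr a d (redN N' τ) := by
  have h2 : Nat.Coprime 2 N' := hodd.coprime_two_left
  let e := ZMod.chineseRemainder h2
  have hshift : ∀ q, e.symm q + τ = e.symm (q + e τ) := fun q => by
    rw [map_add, RingEquiv.symm_apply_apply]
  simp only [even_val_iff_chineseRemainder_fst_eq_zero h2, redN_eq_chineseRemainder_snd h2]
  unfold pcorr
  rw [← e.symm.toEquiv.sum_comp, Fintype.sum_prod_type,
    show (Finset.univ : Finset (ZMod 2)) = {0, 1} from rfl, Finset.sum_pair zero_ne_one]
  simp only [RingEquiv.toEquiv_eq_coe, EquivLike.coe_coe, hshift]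
  obtain ⟨p, σ⟩ := e τ
  simp only [e, Prod.mk_add_mk, parityInterleave_chineseRemainder_symm]
  rcases (by decide : ∀ p : ZMod 2, p = 0 ∨ p = 1) p with rfl | rfl
  · simp
  · simp [show (1 + 1 : ZMod 2) = 0 from rfl, add_comm]

theorem interleave_eq_parityInterleave {N' : ℕ} (u₀ u₁ : ZMod N' → ZMod 4) :
    interleave u₀ u₁ =
      parityInterleave (fun x => (1 + I) * (zi (u₁ x) + 2 * zi (u₀ x)))
        (fun x => (1 + I) * I * (zi (u₀ x) - 2 * zi (u₁ x))) :=
  rfl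

theorem interleave_even_mul_conj_add_odd_mul_conj (a b c d : ℂ) :
    (1 + I) * (b + 2 * a) * conj ((1 + I) * (d + 2 * c)) +
      (1 + I) * I * (a - 2 * b) * conj ((1 + I) * I * (c - 2 * d)) =
    10 * (a * conj c + b * conj d) := by
  simp only [map_mul, map_add, map_sub, map_one, map_ofNat, conj_I]
  linear_combination (-((b + 2 * a) * (conj d + 2 * conj c)) +
    (I ^ 2 - 2) * ((a - 2 * b) * (conj c - 2 * conj d))) * I_sq

theorem interleave_odd_mul_conj_add_even_mul_conj (a b c d : ℂ) :
    (1 + I) * I * (a - 2 * b) * conj ((1 + I) * (d + 2 * c)) +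
      (1 + I) * (b + 2 * a) * conj ((1 + I) * I * (c - 2 * d)) =
    10 * I * (a * conj d - b * conj c) := by
  simp only [map_mul, map_add, map_sub, map_one, map_ofNat, conj_I]
  linear_combination (5 * I * (b * conj c - a * conj d)) * I_sq

theorem pcorr_interleave {N' : ℕ} [NeZero N'] (hodd : Odd N') (u₀ u₁ v₀ v₁ : ZMod N' → ZMod 4)
    (τ : ZMod (2 * N')) :
    pcorr (interleave u₀ u₁) (interleave v₀ v₁) τ =
      if Even τ.val then 10 * (qcorr u₀ v₀ (redN N' τ) + qcorr u₁ v₁ (redN N' τ))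
      else 10 * I * (qcorr u₀ v₁ (redN N' τ) - qcorr u₁ v₀ (redN N' τ)) := by
  rw [interleave_eq_parityInterleave, interleave_eq_parityInterleave,
    pcorr_parityInterleave hodd]
  split_ifs
  · simp only [pcorr, qcorr, ← Finset.sum_add_distrib, Finset.mul_sum,
      interleave_even_mul_conj_add_odd_mul_conj]
  · simp only [pcorr, qcorr, ← Finset.sum_add_distrib, ← Finset.sum_sub_distrib, Finset.mul_sum,
      interleave_odd_mul_conj_add_even_mul_conj]

theorem norm_neg_one_add_le {w : ℂ} {r : ℝ} (hw : ‖w‖ ≤ r) : ‖-1 + w‖ ≤ 1 + r :=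
  norm_add_le_of_le (by simp) hw

/-- Correlation bound for the interleaved 16-QAM family `IQ₁₆`:
under the right-angle structure of matched component correlations and the
`1 + √(N'+1)` bound on crossed ones, every correlation of the interleaved
sequences is bounded by `20·(1 + √(N'+1))`. -/
theorem interleaved_IQ16_correlation_bound (N' : ℕ) (hodd : Odd N') [NeZero N']
    (u₀ u₁ v₀ v₁ : ZMod N' → ZMod 4)
    (hmatch : ∀ σ : ZMod N', ∃ w ε : ℂ, (ε = 1 ∨ ε = -1) ∧
      ‖w‖ ≤ Real.sqrt (N' + 1) ∧
      qcorr u₀ v₀ σ = -1 + w ∧ qcorr u₁ v₁ σ = -1 + ε * Complex.I * w)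
    (hcross₀ : ∀ σ : ZMod N', ‖qcorr u₀ v₁ σ‖ ≤ 1 + Real.sqrt (N' + 1))
    (hcross₁ : ∀ σ : ZMod N', ‖qcorr u₁ v₀ σ‖ ≤ 1 + Real.sqrt (N' + 1))
    (τ : ZMod (2 * N')) :
    ‖pcorr (interleave u₀ u₁) (interleave v₀ v₁) τ‖
      ≤ 20 * (1 + Real.sqrt (N' + 1)) := by
  rw [pcorr_interleave hodd]
  set σ := redN N' τ
  set B := 1 + Real.sqrt (N' + 1)
  split_ifs
  · obtain ⟨w, ε, hε, hw, h₀₀, h₁₁⟩ := hmatch σ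
    have hεw : ‖ε * I * w‖ = ‖w‖ := by rcases hε with rfl | rfl <;> simp
    calc ‖10 * (qcorr u₀ v₀ σ + qcorr u₁ v₁ σ)‖ = 10 * ‖qcorr u₀ v₀ σ + qcorr u₁ v₁ σ‖ := by
          simp
      _ ≤ 10 * (B + B) := by
          rw [h₀₀, h₁₁]
          gcongr
          exact norm_add_le_of_le (norm_neg_one_add_le hw) (norm_neg_one_add_le (hεw ▸ hw))
      _ = 20 * B := by ring
  · calc ‖10 * I * (qcorr u₀ v₁ σ - qcorr u₁ v₀ σ)‖ = 10 * ‖qcorr u₀ v₁ σ - qcorr u₁ v₀ σ‖ := by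
          simp
      _ ≤ 10 * (B + B) := by gcongr; exact norm_sub_le_of_le (hcross₀ σ) (hcross₁ σ)
      _ = 20 * B := by ring
end

section
/- Let F be a finite field with 2^r elements (r ≥ 1), let m ≥ 1, and let δ : Fin m → F be injective with δ_0 = 0. Call a subset G ⊆ F δ-separated if for all g, g' ∈ G and all p, q ∈ Fin m, g + δ_p = g' + δ_q implies g = g' and p = q. Then: (i) every δ-separated set G satisfies m · |G| ≤ 2^r; and (ii) if G is δ-separated and has maximal cardinality among δ-separated subsets of F, then |G| · (1 + (m−1) + (m−1)·(m−2)/2) ≥ 2^r. -/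
/-- Hamming-type upper bound and Gilbert–Varshamov-type lower bound on
δ-separated sets `G` in a finite field `F` of cardinality `2^r`: (i) `m·|G| ≤ 2^r`
for every δ-separated `G`, and (ii) `2^r ≤ |G|·(1 + (m-1) + (m-1)(m-2)/2)` whenever
`G` is δ-separated of maximal cardinality. -/
theorem separated_set_hamming_and_GV_bounds (r m : ℕ) (hr : 1 ≤ r) [NeZero m]
    (F : Type) [Field F] [Fintype F] (hF : Fintype.card F = 2 ^ r)
    (δ : Fin m → F) (hinj : Function.Injective δ) (hδ0 : δ 0 = 0) :
    (∀ G : Finset F,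
      (∀ g ∈ G, ∀ g' ∈ G, ∀ p q : Fin m, g + δ p = g' + δ q → g = g' ∧ p = q) →
      m * G.card ≤ 2 ^ r) ∧
    (∀ G : Finset F,
      (∀ g ∈ G, ∀ g' ∈ G, ∀ p q : Fin m, g + δ p = g' + δ q → g = g' ∧ p = q) →
      (∀ G' : Finset F,
        (∀ g ∈ G', ∀ g' ∈ G', ∀ p q : Fin m, g + δ p = g' + δ q → g = g' ∧ p = q) →
        G'.card ≤ G.card) →
      2 ^ r ≤ G.card * (1 + (m - 1) + (m - 1) * (m - 2) / 2)) := by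
  classical
  -- characteristic 2
  haveI hchar2 : CharP F 2 := by
    obtain ⟨n, hp, hcard⟩ := FiniteField.card F (ringChar F)
    have hdvd : ringChar F ∣ 2 ^ r := by
      rw [← hF, hcard]
      exact dvd_pow_self _ n.pos.ne'
    have h2 : ringChar F = 2 :=
      (Nat.prime_dvd_prime_iff_eq hp Nat.prime_two).mp (hp.dvd_of_dvd_pow hdvd)
    rw [← h2]; exact ringChar.charP F
  constructor
  · -- Hamming-type bound
    intro G hsep
    have hinj' : Function.Injective (fun gp : ↥G × Fin m => (gp.1 : F) + δ gp.2) := by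
      rintro ⟨⟨g, hg⟩, p⟩ ⟨⟨g', hg'⟩, q⟩ h
      obtain ⟨h1, h2⟩ := hsep g hg g' hg' p q h
      simp [h1, h2]
    have := Fintype.card_le_of_injective _ hinj'
    rwa [Fintype.card_prod, Fintype.card_coe, Fintype.card_fin, hF, mul_comm] at this
  · -- Gilbert–Varshamov-type bound
    intro G hsep hmax
    set D : Finset F :=
      (Finset.univ : Finset (Fin m × Fin m)).image (fun pq => δ pq.1 - δ pq.2) with hD
    -- covering property
    have hcover : ∀ x : F, ∃ g ∈ G, ∃ d ∈ D, x = g + d := by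
      intro x
      by_contra hx
      push_neg at hx
      have hxball : ∀ g ∈ G, ∀ p q : Fin m, x + δ q ≠ g + δ p := by
        intro g hg p q h
        exact hx g hg (δ p - δ q)
          (Finset.mem_image.mpr ⟨(p, q), Finset.mem_univ _, rfl⟩) (by linear_combination h)
      have hxG : x ∉ G := fun hg => hxball x hg 0 0 rfl
      have hsep' : ∀ g ∈ insert x G, ∀ g' ∈ insert x G, ∀ p q : Fin m,
          g + δ p = g' + δ q → g = g' ∧ p = q := by
        intro g hg g' hg' p q h
        rcases Finset.mem_insert.mp hg with hgx | hgG <;>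
          rcases Finset.mem_insert.mp hg' with hgx' | hg'G
        · subst hgx; subst hgx'; exact ⟨rfl, hinj (by linear_combination h)⟩
        · subst hgx; exact absurd h (hxball g' hg'G q p)
        · subst hgx'; exact absurd h.symm (hxball g hgG p q)
        · exact hsep g hgG g' hg'G p q h
      have := hmax (insert x G) hsep'
      rw [Finset.card_insert_of_notMem hxG] at this
      omega
    -- cardinality of D
    have hDcard : D.card ≤ 1 + (m - 1) + (m - 1) * (m - 2) / 2 := by
      set E : Finset F := (Finset.univ : Finset (Fin m)).offDiag.image
        (fun pq => δ pq.1 + δ pq.2) with hE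
      have hDE : D ⊆ insert 0 E := by
        intro d hd
        obtain ⟨⟨p, q⟩, -, rfl⟩ := Finset.mem_image.mp hd
        by_cases hpq : p = q
        · subst hpq; simp
        · refine Finset.mem_insert_of_mem (Finset.mem_image.mpr
            ⟨(p, q), Finset.mem_offDiag.mpr ⟨Finset.mem_univ _, Finset.mem_univ _, ?_⟩,
              (CharTwo.sub_eq_add _ _).symm⟩)
          simpa using hpq
      -- each element of E has at least two preimages
      have h2E : 2 * E.card ≤ ((Finset.univ : Finset (Fin m)).offDiag).card := by
        apply Finset.mul_card_image_le_card
        intro b hb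
        obtain ⟨⟨p, q⟩, hpq, rfl⟩ := Finset.mem_image.mp hb
        have hne : p ≠ q := by simpa using (Finset.mem_offDiag.mp hpq).2.2
        have h1 : (p, q) ∈ (Finset.univ : Finset (Fin m)).offDiag.filter
            (fun a => δ a.1 + δ a.2 = δ p + δ q) :=
          Finset.mem_filter.mpr ⟨hpq, rfl⟩
        have h2 : (q, p) ∈ (Finset.univ : Finset (Fin m)).offDiag.filter
            (fun a => δ a.1 + δ a.2 = δ p + δ q) := by
          refine Finset.mem_filter.mpr
            ⟨Finset.mem_offDiag.mpr ⟨Finset.mem_univ _, Finset.mem_univ _, ?_⟩, add_comm _ _⟩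
          simpa using hne.symm
        have : ((p, q) : Fin m × Fin m) ≠ (q, p) := by simp [hne]
        exact Finset.one_lt_card.mpr ⟨_, h1, _, h2, this⟩
      have hoff : ((Finset.univ : Finset (Fin m)).offDiag).card = m * m - m := by
        rw [Finset.offDiag_card]; simp
      -- arithmetic
      obtain ⟨t, ht⟩ : ∃ t, (m - 1) * (m - 2) = 2 * t := by
        rcases Nat.even_or_odd (m - 1) with ⟨k, hk⟩ | ⟨k, hk⟩
        · exact ⟨k * (m - 2), by rw [hk]; ring⟩
        · have h2 : m - 2 = 2 * k := by omega
          exact ⟨(m - 1) * k, by rw [h2]; ring⟩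
      have hmm : m * m - m = 2 * (m - 1) + (m - 1) * (m - 2) := by
        rcases m with _ | _ | k
        · rfl
        · rfl
        · have h1 : k + 1 + 1 - 1 = k + 1 := rfl
          have h2 : k + 1 + 1 - 2 = k := rfl
          rw [h1, h2]
          show (k + 2) * (k + 2) - (k + 2) = _
          have h3 : (k + 2) * (k + 2) = (k + 2) + (2 * (k + 1) + (k + 1) * k) := by ring
          rw [h3, Nat.add_sub_cancel_left]
      have hEcard : E.card ≤ (m - 1) + t := by omega
      have := Finset.card_insert_le 0 E
      have hdiv : (m - 1) * (m - 2) / 2 = t := by omega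
      have := Finset.card_le_card hDE
      omega
    -- assemble
    have hsub : (Finset.univ : Finset F) ⊆ G.biUnion (fun g => D.image (g + ·)) := by
      intro x _
      obtain ⟨g, hg, d, hd, rfl⟩ := hcover x
      exact Finset.mem_biUnion.mpr ⟨g, hg, Finset.mem_image.mpr ⟨d, hd, rfl⟩⟩
    have h1 : Fintype.card F ≤ G.card * D.card := by
      calc Fintype.card F = (Finset.univ : Finset F).card := (Finset.card_univ).symm
        _ ≤ (G.biUnion (fun g => D.image (g + ·))).card := Finset.card_le_card hsub
        _ ≤ ∑ g ∈ G, (D.image (g + ·)).card := Finset.card_biUnion_le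
        _ ≤ ∑ _g ∈ G, D.card := Finset.sum_le_sum (fun g _ => Finset.card_image_le)
        _ = G.card * D.card := by simp [mul_comm]
    calc 2 ^ r = Fintype.card F := hF.symm
      _ ≤ G.card * D.card := h1
      _ ≤ G.card * (1 + (m - 1) + (m - 1) * (m - 2) / 2) :=
          Nat.mul_le_mul_left _ hDcard
end
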